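/- Let G be an n-vertex graph of treewidth t, and let G*=(V ∪ C, E ∪ D) be obtained from G by adding, for every subset S of V forming a clique in G, a new vertex v_S adjacent exactly to the vertices of S. Then G* has O(2^t · n) vertices and the treewidth of G* is at most t+1. -/

import Mathlib

open Set

noncomputable section



/-- The unit sphere in `ℝ³`. -/
abbrev Sphere2 : Set (EuclideanSpace ℝ (Fin 3)) := Metric.sphere 0 1

/-- The closed unit disk in `ℝ²`. -/
abbrev Disk2 : Set (EuclideanSpace ℝ (Fin 2)) := Metric.closedBall 0 1

/-- `M` is a map of the graph `G` on the sphere: every vertex gets a nation homeomorphic to a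
closed disk, nations have pairwise disjoint interiors, and two distinct vertices are adjacent
iff the boundaries of their nations share a point. -/
structure IsMapOf {V : Type*} (G : SimpleGraph V) (M : V → Set ↥Sphere2) : Prop where
  nation_disk : ∀ v, Nonempty (↥(M v) ≃ₜ ↥Disk2)
  interiors_disjoint : ∀ ⦃v w : V⦄, v ≠ w → interior (M v) ∩ interior (M w) = ∅
  adj_iff : ∀ ⦃v w : V⦄, v ≠ w →
    (G.Adj v w ↔ (frontier (M v) ∩ frontier (M w)).Nonempty)

/-- A map is hole-free if the nations cover the whole sphere. -/
def IsHoleFreeMap {V : Type*} (M : V → Set ↥Sphere2) : Prop := (⋃ v, M v) = Set.univ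

/-- A `k`-map: at most `k` nations meet at any common point. -/
def IsKMapOf {V : Type*} (G : SimpleGraph V) (k : ℕ) (M : V → Set ↥Sphere2) : Prop :=
  IsMapOf G M ∧ ∀ p : ↥Sphere2, {v : V | p ∈ M v}.ncard ≤ k

def IsMapGraph {V : Type*} (G : SimpleGraph V) : Prop := ∃ M, IsMapOf G M

def IsKMapGraph {V : Type*} (G : SimpleGraph V) (k : ℕ) : Prop := ∃ M, IsKMapOf G k M

def IsHoleFreeMapGraph {V : Type*} (G : SimpleGraph V) : Prop :=
  ∃ M, IsMapOf G M ∧ IsHoleFreeMap M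

def IsHoleFreeKMapGraph {V : Type*} (G : SimpleGraph V) (k : ℕ) : Prop :=
  ∃ M, IsKMapOf G k M ∧ IsHoleFreeMap M

/-- A plane embedding of a graph: vertices are distinct points of the plane, each edge is a
simple arc between its endpoints, arcs meet other vertices only at their endpoints and meet
each other only at common endpoints. -/
structure IsPlaneEmbedding {α : Type*} (G : SimpleGraph α)
    (vtx : α → EuclideanSpace ℝ (Fin 2))
    (arc : α → α → Set (EuclideanSpace ℝ (Fin 2))) : Prop where
  vtx_inj : Function.Injective vtx
  arc_symm : ∀ u v, arc u v = arc v u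
  arc_path : ∀ ⦃u v⦄, G.Adj u v → ∃ p : Path (vtx u) (vtx v),
      Function.Injective ⇑p ∧ Set.range ⇑p = arc u v
  arc_vtx : ∀ ⦃u v⦄, G.Adj u v → ∀ w, vtx w ∈ arc u v → w = u ∨ w = v
  arc_meet : ∀ ⦃u v u' v'⦄, G.Adj u v → G.Adj u' v' → s(u, v) ≠ s(u', v') →
      arc u v ∩ arc u' v' ⊆ ({vtx u, vtx v} ∩ {vtx u', vtx v'})

/-- A graph is planar if it admits a plane embedding. -/
def GraphPlanar {α : Type*} (G : SimpleGraph α) : Prop :=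
  ∃ vtx arc, IsPlaneEmbedding G vtx arc

/-- `W` is a witness of `G`: a planar bipartite graph on the real vertices `V` and the
intersection vertices `I`, with all edges between `V` and `I`, whose half square on `V` is `G`. -/
structure IsWitness {V I : Type*} (G : SimpleGraph V) (W : SimpleGraph (V ⊕ I)) : Prop where
  planar : GraphPlanar W
  bipartite : ∀ ⦃a b : V ⊕ I⦄, W.Adj a b →
      (a.isLeft = true ∧ b.isRight = true) ∨ (a.isRight = true ∧ b.isLeft = true)
  halfSquare : ∀ v w : V, G.Adj v w ↔
      (v ≠ w ∧ ∃ i : I, W.Adj (Sum.inl v) (Sum.inr i) ∧ W.Adj (Sum.inl w) (Sum.inr i))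

/-- The degree of the intersection vertex `i` in the witness `W`. -/
def interDeg {V I : Type*} (W : SimpleGraph (V ⊕ I)) (i : I) : ℕ :=
  (W.neighborSet (Sum.inr i)).ncard




/-- An (abstract) combinatorial embedding of a graph: a collection of faces, each with a
boundary consisting of a set of closed walks; every edge lies on the boundary of some face. -/
structure CombEmbedding {α : Type*} (G : SimpleGraph α) where
  Face : Type
  boundary : Face → Set ((u : α) × G.Walk u u)
  edge_cover : ∀ e ∈ G.edgeSet, ∃ f : Face, ∃ cw ∈ boundary f, e ∈ cw.2.edges

/-- An intersection vertex is inessential if it has degree 2 and its neighbourhood is strictly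
contained in the neighbourhood of another intersection vertex. -/
def Inessential {V I : Type*} (W : SimpleGraph (V ⊕ I)) (i : I) : Prop :=
  (W.neighborSet (Sum.inr i)).ncard = 2 ∧
    ∃ i' : I, W.neighborSet (Sum.inr i) ⊂ W.neighborSet (Sum.inr i')

/-- The embedding has a face whose boundary is a single closed walk with exactly four edges
with end-vertices `v, i1, w, i2`. -/
def FourFace {V I : Type*} {W : SimpleGraph (V ⊕ I)} (emb : CombEmbedding W)
    (v w : V) (i1 i2 : I) : Prop :=
  ∃ f : emb.Face, ∃ cw : (u : V ⊕ I) × W.Walk u u, emb.boundary f = {cw} ∧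
    cw.2.length = 4 ∧
    {e | e ∈ cw.2.edges} =
      ({s(Sum.inl v, Sum.inr i1), s(Sum.inr i1, Sum.inl w),
        s(Sum.inl w, Sum.inr i2), s(Sum.inr i2, Sum.inl v)} : Set (Sym2 (V ⊕ I)))

/-- Two intersection vertices form a twin-pair. -/
def TwinPair {V I : Type*} (W : SimpleGraph (V ⊕ I)) (emb : CombEmbedding W)
    (i1 i2 : I) : Prop :=
  i1 ≠ i2 ∧ ∃ v w : V, v ≠ w ∧
    W.neighborSet (Sum.inr i1) = {Sum.inl v, Sum.inl w} ∧
    W.neighborSet (Sum.inr i2) = {Sum.inl v, Sum.inl w} ∧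
    FourFace emb v w i1 i2

/-- A compact embedded witness of `G`: a witness together with a combinatorial embedding,
containing neither inessential intersection vertices nor twin-pairs. -/
structure IsCompactWitness {V I : Type*} (G : SimpleGraph V) (W : SimpleGraph (V ⊕ I))
    (emb : CombEmbedding W) : Prop where
  witness : IsWitness G W
  no_inessential : ∀ i : I, ¬ Inessential W i
  no_twin : ∀ i1 i2 : I, ¬ TwinPair W emb i1 i2

/-- A graph is biconnected if it is connected and has no cut-vertex. -/
def IsBiconnectedG {α : Type*} (G : SimpleGraph α) : Prop :=
  G.Connected ∧ ∀ v : α, (G.induce {w | w ≠ v}).Preconnected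

/-- A connected embedded graph is a quadrangulation if each face boundary consists of a single
closed walk with 4 edges. -/
def IsQuadrangulation {α : Type*} (G : SimpleGraph α) (emb : CombEmbedding G) : Prop :=
  G.Connected ∧ ∀ f : emb.Face, ∃ cw : (u : α) × G.Walk u u,
    emb.boundary f = {cw} ∧ cw.2.length = 4

/-- A biconnected component (block) of `G`: a maximal biconnected subgraph. -/
def IsBlock {V : Type*} (G : SimpleGraph V) (B : G.Subgraph) : Prop :=
  IsBiconnectedG B.coe ∧ ∀ B' : G.Subgraph, B ≤ B' → IsBiconnectedG B'.coe → B' = B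

/-- A tree-decomposition of `G` with bags indexed by `ι`. -/
structure TreeDecomp {V : Type*} (G : SimpleGraph V) (ι : Type*) where
  tree : SimpleGraph ι
  isTree : tree.IsTree
  bag : ι → Finset V
  edge_mem : ∀ ⦃u v : V⦄, G.Adj u v → ∃ i, u ∈ bag i ∧ v ∈ bag i
  bags_connected : ∀ v : V, (tree.induce {i | v ∈ bag i}).Connected

/-- The vertices of `G` appearing in bags of the subtree rooted at `X` (w.r.t. root `ρ`):
those lying in a bag `i` such that every walk from `ρ` to `i` passes through `X`. -/
def TreeDecomp.descVerts {V ι : Type*} {G : SimpleGraph V} (td : TreeDecomp G ι)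
    (ρ X : ι) : Set V :=
  {v | ∃ i : ι, v ∈ td.bag i ∧ ∀ p : td.tree.Walk ρ i, X ∈ p.support}

/-- `X'` is a child of `X` in the tree-decomposition rooted at `ρ`. -/
def TreeDecomp.IsChild {V ι : Type*} {G : SimpleGraph V} (td : TreeDecomp G ι)
    (ρ X X' : ι) : Prop :=
  td.tree.Adj X X' ∧ ∀ p : td.tree.Walk ρ X', X ∈ p.support

/-- The treewidth of a graph. -/
def treewidth {V : Type} (G : SimpleGraph V) : ℕ :=
  sInf {t | ∃ (ι : Type) (td : TreeDecomp G ι), ∀ i, (td.bag i).card ≤ t + 1}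


/-- The augmented graph `G*`: one new vertex `v_S` for every clique `S` of `G`, adjacent
exactly to the vertices of `S`, added on top of `G`. -/
def starGraph {V : Type} (G : SimpleGraph V) :
    SimpleGraph (V ⊕ {S : Finset V // G.IsClique (S : Set V)}) :=
  SimpleGraph.fromRel (fun a b =>
    match a, b with
    | Sum.inl u, Sum.inl w => G.Adj u w
    | Sum.inl u, Sum.inr S => u ∈ S.val
    | _, _ => False)

section Aux
open SimpleGraph Walk

open SimpleGraph Walk

namespace TreeTools

variable {ι : Type} {T : SimpleGraph ι}

noncomputable def thePath (hT : T.IsTree) (a b : ι) : T.Walk a b :=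
  ((isTree_iff_existsUnique_path.mp hT).2 a b).choose

lemma thePath_isPath (hT : T.IsTree) (a b : ι) : (thePath hT a b).IsPath :=
  ((isTree_iff_existsUnique_path.mp hT).2 a b).choose_spec.1

lemma thePath_unique (hT : T.IsTree) {a b : ι} {p : T.Walk a b} (hp : p.IsPath) :
    p = thePath hT a b :=
  ((isTree_iff_existsUnique_path.mp hT).2 a b).choose_spec.2 p hp

/-- geodesic lemma -/
lemma support_thePath_subset (hT : T.IsTree) {X : Set ι} (hX : (T.induce X).Preconnected)
    {a b : ι} (ha : a ∈ X) (hb : b ∈ X) : ∀ x ∈ (thePath hT a b).support, x ∈ X := by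
  classical
  obtain ⟨w⟩ := hX ⟨a, ha⟩ ⟨b, hb⟩
  set w' := w.map (SimpleGraph.Embedding.induce X).toHom with hw'
  have hsub : ∀ x ∈ w'.support, x ∈ X := by
    intro x hx
    rw [hw', Walk.support_map, List.mem_map] at hx
    obtain ⟨y, _, rfl⟩ := hx
    exact y.2
  have heq := thePath_unique hT (p := w'.toPath.1) w'.toPath.2
  intro x hx
  rw [show thePath hT a b
      = thePath hT ((SimpleGraph.Embedding.induce X).toHom ⟨a, ha⟩)
        ((SimpleGraph.Embedding.induce X).toHom ⟨b, hb⟩) from rfl, ← heq] at hx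
  exact hsub x (Walk.support_toPath_subset _ hx)

section DE
variable [DecidableEq ι]

noncomputable def depth (hT : T.IsTree) (ρ x : ι) : ℕ := (thePath hT ρ x).length

lemma takeUntil_thePath (hT : T.IsTree) {ρ m x : ι} (hx : x ∈ (thePath hT ρ m).support) :
    (thePath hT ρ m).takeUntil x hx = thePath hT ρ x :=
  thePath_unique hT ((thePath_isPath hT ρ m).takeUntil hx)

lemma dropUntil_thePath (hT : T.IsTree) {ρ m x : ι} (hx : x ∈ (thePath hT ρ m).support) :
    (thePath hT ρ m).dropUntil x hx = thePath hT x m :=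
  thePath_unique hT ((thePath_isPath hT ρ m).dropUntil hx)

lemma depth_le (hT : T.IsTree) {ρ m x : ι} (hx : x ∈ (thePath hT ρ m).support) :
    depth hT ρ x ≤ depth hT ρ m := by
  have := Walk.length_takeUntil_le (thePath hT ρ m) hx
  rwa [takeUntil_thePath hT hx] at this

lemma eq_of_depth_eq (hT : T.IsTree) {ρ m x : ι} (hx : x ∈ (thePath hT ρ m).support)
    (hd : depth hT ρ x = depth hT ρ m) : x = m := by
  have hspec := Walk.take_spec (thePath hT ρ m) hx
  have hlen := congrArg Walk.length hspec
  rw [Walk.length_append, takeUntil_thePath hT hx] at hlen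
  have h0 : ((thePath hT ρ m).dropUntil x hx).length = 0 := by
    unfold depth at hd; omega
  exact Walk.eq_of_length_eq_zero h0

lemma support_thePath_prefix (hT : T.IsTree) {ρ m x : ι} (hx : x ∈ (thePath hT ρ m).support) :
    ∀ z ∈ (thePath hT ρ x).support, z ∈ (thePath hT ρ m).support := by
  intro z hz
  rw [← takeUntil_thePath hT hx] at hz
  exact Walk.support_takeUntil_subset _ hx hz

/-- local gates: along any path from the root to a point of `X` there is a vertex `g ∈ X`
whose root-path meets `X` only at `g`. -/
lemma exists_localgate (hT : T.IsTree) (ρ : ι) {X : Set ι} :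
    ∀ (k : ℕ) (m : ι), m ∈ X → depth hT ρ m ≤ k →
    ∃ g ∈ X, g ∈ (thePath hT ρ m).support ∧
      ∀ x ∈ (thePath hT ρ g).support, x ∈ X → x = g := by
  intro k
  induction k using Nat.strong_induction_on with
  | _ k IH =>
    intro m hm hdk
    by_cases h : ∀ x ∈ (thePath hT ρ m).support, x ∈ X → x = m
    · exact ⟨m, hm, Walk.end_mem_support _, h⟩
    · push_neg at h
      obtain ⟨x, hxs, hxX, hxm⟩ := h
      have hlt : depth hT ρ x < depth hT ρ m := by
        rcases lt_or_eq_of_le (depth_le hT hxs) with h' | h'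
        · exact h'
        · exact absurd (eq_of_depth_eq hT hxs h') hxm
      obtain ⟨g, hgX, hgs, hgQ⟩ := IH (depth hT ρ x) (by omega) x hxX le_rfl
      exact ⟨g, hgX, support_thePath_prefix hT hxs g hgs, hgQ⟩

/-- uniqueness of gates -/
lemma gate_eq (hT : T.IsTree) (ρ : ι) {X : Set ι} (hX : (T.induce X).Preconnected)
    {g g' : ι} (hg : g ∈ X) (hQg : ∀ x ∈ (thePath hT ρ g).support, x ∈ X → x = g)
    (hg' : g' ∈ X) (hQg' : ∀ x ∈ (thePath hT ρ g').support, x ∈ X → x = g') :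
    g = g' := by
  by_contra hne
  have hρ : ρ ∉ X := by
    intro hρX
    have h1 : ρ = g := hQg ρ (Walk.start_mem_support _) hρX
    have h2 : ρ = g' := hQg' ρ (Walk.start_mem_support _) hρX
    exact hne (h1 ▸ h2)
  set r := thePath hT g g' with hrdef
  have hr : ∀ z ∈ r.support, z ∈ X := support_thePath_subset hT hX hg hg'
  -- bypass inclusion
  have hincl : ∀ z ∈ (thePath hT ρ g').support,
      z ∈ (thePath hT ρ g).support ∨ z ∈ r.support := by
    intro z hz
    have hW : ((thePath hT ρ g).append r).toPath.1 = thePath hT ρ g' :=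
      thePath_unique hT ((thePath hT ρ g).append r).toPath.2
    rw [← hW] at hz
    have := Walk.support_toPath_subset _ hz
    rwa [Walk.mem_support_append_iff] at this
  -- penultimate vertex of thePath ρ g'
  rcases hrev : (thePath hT ρ g').reverse with _ | @⟨_, y, _, hadj, rest⟩
  · exact hρ hg'
  · have hy : y ∈ (thePath hT ρ g').support := by
      have : y ∈ (thePath hT ρ g').reverse.support := by
        rw [hrev, Walk.support_cons]
        exact List.mem_cons_of_mem _ (Walk.start_mem_support rest)
      rwa [Walk.support_reverse, List.mem_reverse] at this
    have hyX : y ∉ X := by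
      intro hyX
      exact (hadj.ne' (hQg' y hy hyX)).elim
    have hyg : y ∈ (thePath hT ρ g).support := by
      rcases hincl y hy with h | h
      · exact h
      · exact absurd (hr y h) hyX
    set s := (thePath hT ρ g).dropUntil y hyg with hsdef
    have hspath : s.IsPath := (thePath_isPath hT ρ g).dropUntil hyg
    have hssub : ∀ z ∈ s.support, z ∈ (thePath hT ρ g).support :=
      fun z hz => Walk.support_dropUntil_subset _ hyg hz
    have hsX : ∀ z ∈ s.support, z ∈ X → z = g := fun z hz hzX => hQg z (hssub z hz) hzX
    have hgr : r.support = g :: r.support.tail := Walk.support_eq_cons r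
    have hgnotail : g ∉ r.support.tail := by
      have hnd : r.support.Nodup := (thePath_isPath hT g g').support_nodup
      rw [hgr] at hnd
      exact (List.nodup_cons.mp hnd).1
    have hW2 : (s.append r).IsPath := by
      rw [Walk.isPath_def, Walk.support_append]
      refine List.Nodup.append hspath.support_nodup ?_ ?_
      · exact (thePath_isPath hT g g').support_nodup.tail
      · intro z hz1 hz2
        have hzX : z ∈ X := hr z (List.mem_of_mem_tail hz2)
        exact hgnotail ((hsX z hz1 hzX) ▸ hz2)
    have hedge : s(g', y) ∉ (s.append r).edges := by
      rw [Walk.edges_append, List.mem_append]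
      rintro (h | h)
      · exact hne (hsX g' (Walk.fst_mem_support_of_mem_edges s h) hg').symm
      · exact hyX (hr y (Walk.snd_mem_support_of_mem_edges r h))
    have hcyc : (Walk.cons hadj (s.append r)).IsCycle :=
      (Walk.cons_isCycle_iff _ hadj).mpr ⟨hW2, hedge⟩
    exact hT.IsAcyclic _ hcyc

/-- gate existence -/
lemma exists_gate (hT : T.IsTree) (ρ : ι) {X : Set ι} (hX : (T.induce X).Connected) :
    ∃ g ∈ X, ∀ m ∈ X, g ∈ (thePath hT ρ m).support := by
  obtain ⟨⟨m0, hm0⟩⟩ := hX.nonempty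
  obtain ⟨g, hgX, _, hQg⟩ := exists_localgate hT ρ (depth hT ρ m0) m0 hm0 le_rfl
  refine ⟨g, hgX, fun m hm => ?_⟩
  obtain ⟨g', hg'X, hg's, hQg'⟩ := exists_localgate hT ρ (depth hT ρ m) m hm le_rfl
  rw [gate_eq hT ρ hX.preconnected hgX hQg hg'X hQg']
  exact hg's

/-- the key lemma -/
lemma gate_mem (hT : T.IsTree) (ρ : ι) {X Y : Set ι}
    (hY : (T.induce Y).Preconnected)
    {gX gY : ι} (hgX : gX ∈ X) (hgXgate : ∀ m ∈ X, gX ∈ (thePath hT ρ m).support)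
    (hgY : gY ∈ Y) (hgYgate : ∀ m ∈ Y, gY ∈ (thePath hT ρ m).support)
    {m : ι} (hmX : m ∈ X) (hmY : m ∈ Y)
    (hd : depth hT ρ gY ≤ depth hT ρ gX) : gX ∈ Y := by
  have hgXs : gX ∈ (thePath hT ρ m).support := hgXgate m hmX
  have hgYs : gY ∈ (thePath hT ρ m).support := hgYgate m hmY
  have hsplit := Walk.take_spec (thePath hT ρ m) hgYs
  have : gX ∈ ((thePath hT ρ m).takeUntil gY hgYs).support ∨
      gX ∈ ((thePath hT ρ m).dropUntil gY hgYs).support := by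
    rw [← Walk.mem_support_append_iff, hsplit]; exact hgXs
  rcases this with h | h
  · rw [takeUntil_thePath hT hgYs] at h
    have h2 : depth hT ρ gX = depth hT ρ gY := le_antisymm (depth_le hT h) hd
    rw [eq_of_depth_eq hT h h2]
    exact hgY
  · rw [dropUntil_thePath hT hgYs] at h
    exact support_thePath_subset hT hY hgY hmY gX h
end DE


namespace TD
open TreeTools

variable {V : Type} {G : SimpleGraph V} {ι : Type} (td : TreeDecomp G ι)

lemma nonempty_idx (td : TreeDecomp G ι) : Nonempty ι := td.isTree.isConnected.nonempty

variable [DecidableEq ι]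

noncomputable def gat (ρ : ι) (v : V) : ι :=
  (exists_gate td.isTree ρ (td.bags_connected v)).choose

lemma gat_mem_bag (ρ : ι) (v : V) : v ∈ td.bag (gat td ρ v) :=
  (exists_gate td.isTree ρ (td.bags_connected v)).choose_spec.1

lemma gat_on_path (ρ : ι) (v : V) : ∀ i, v ∈ td.bag i →
    gat td ρ v ∈ (thePath td.isTree ρ i).support := fun i hi =>
  (exists_gate td.isTree ρ (td.bags_connected v)).choose_spec.2 i hi

/-- the key lemma, in tree-decomposition terms -/
lemma gat_mem_of_adj (ρ : ι) {v w : V} (h : G.Adj v w)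
    (hd : depth td.isTree ρ (gat td ρ w) ≤ depth td.isTree ρ (gat td ρ v)) :
    w ∈ td.bag (gat td ρ v) := by
  obtain ⟨m, hmv, hmw⟩ := td.edge_mem h
  exact gate_mem td.isTree ρ (X := {i | v ∈ td.bag i}) (Y := {i | w ∈ td.bag i})
    (td.bags_connected w).preconnected
    (gat_mem_bag td ρ v) (fun m hm => gat_on_path td ρ v m hm)
    (gat_mem_bag td ρ w) (fun m hm => gat_on_path td ρ w m hm)
    hmv hmw hd

lemma clique_subset_bag (ρ : ι) (S : Finset V) (hS : G.IsClique (S : Set V)) :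
    ∃ i, ∀ v ∈ S, v ∈ td.bag i := by
  rcases S.eq_empty_or_nonempty with rfl | hne
  · exact ⟨ρ, by simp⟩
  · obtain ⟨v, hvS, hvmax⟩ := S.exists_max_image (fun v => depth td.isTree ρ (gat td ρ v)) hne
    refine ⟨gat td ρ v, fun w hwS => ?_⟩
    rcases eq_or_ne w v with rfl | hwv
    · exact gat_mem_bag td ρ w
    · exact gat_mem_of_adj td ρ (hS (by simpa using hvS) (by simpa using hwS) (Ne.symm hwv))
        (hvmax w hwS)

lemma exists_low_degree (ρ : ι) [Fintype V] [Nonempty V] {t : ℕ}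
    (ht : ∀ i, (td.bag i).card ≤ t + 1) :
    ∃ v : V, (G.neighborSet v).ncard ≤ t := by
  classical
  obtain ⟨v, _, hvmax⟩ := Finset.univ.exists_max_image
    (fun v => depth td.isTree ρ (gat td ρ v)) Finset.univ_nonempty
  refine ⟨v, ?_⟩
  have hsub : G.neighborSet v ⊆ ↑((td.bag (gat td ρ v)).erase v) := by
    intro w hw
    rw [Finset.coe_erase]
    exact ⟨gat_mem_of_adj td ρ hw (hvmax w (Finset.mem_univ w)),
      fun hwv => G.irrefl (hwv ▸ hw)⟩
  calc (G.neighborSet v).ncard ≤ ((↑((td.bag (gat td ρ v)).erase v) : Set V)).ncard :=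
        Set.ncard_le_ncard hsub (Set.toFinite _)
    _ = ((td.bag (gat td ρ v)).erase v).card := Set.ncard_coe_finset _
    _ ≤ t := by
        rw [Finset.card_erase_of_mem (gat_mem_bag td ρ v)]
        have := ht (gat td ρ v); omega

end TD

namespace TD
variable {V : Type} {G : SimpleGraph V} {ι : Type}

open Classical in
noncomputable def restrict (td : TreeDecomp G ι) (v : V) :
    TreeDecomp (G.induce {w | w ≠ v}) ι where
  tree := td.tree
  isTree := td.isTree
  bag := fun i => (td.bag i).subtype (fun w => w ≠ v)
  edge_mem := by
    intro u w h
    have h' : G.Adj u.1 w.1 := h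
    obtain ⟨i, hi1, hi2⟩ := td.edge_mem h'
    exact ⟨i, Finset.mem_subtype.mpr hi1, Finset.mem_subtype.mpr hi2⟩
  bags_connected := by
    intro w
    have h := td.bags_connected w.1
    have hset : {i | w ∈ (td.bag i).subtype (fun w => w ≠ v)} = {i | w.1 ∈ td.bag i} := by
      ext i; simp [Finset.mem_subtype]
    rw [hset]
    exact h

open Classical in
lemma restrict_card (td : TreeDecomp G ι) (v : V) (i : ι) :
    ((restrict td v).bag i).card ≤ (td.bag i).card := by
  calc ((restrict td v).bag i).card = ((td.bag i).filter (fun w => w ≠ v)).card :=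
        Finset.card_subtype _ _
    _ ≤ (td.bag i).card := Finset.card_filter_le _ _

lemma clique_count : ∀ (n : ℕ) (V : Type) (_ : Fintype V) (G : SimpleGraph V) (t : ℕ),
    Fintype.card V = n →
    (∃ (ι : Type) (td : TreeDecomp G ι), ∀ i, (td.bag i).card ≤ t + 1) →
    Nat.card {S : Finset V // G.IsClique (S : Set V)} ≤ n * 2 ^ t + 1 := by
  intro n
  induction n using Nat.strong_induction_on with
  | _ n IH =>
    rintro V _inst G t hcard ⟨ι, td, hw⟩
    classical
    have hCeq : Nat.card {S : Finset V // G.IsClique (S : Set V)}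
        = Set.ncard {S : Finset V | G.IsClique (S : Set V)} := Nat.card_coe_set_eq _
    rcases Nat.eq_zero_or_pos n with rfl | hn
    · have hVempty : IsEmpty V := Fintype.card_eq_zero_iff.mp hcard
      have hall : ∀ S : Finset V, S = ∅ := fun S => Finset.eq_empty_of_forall_notMem
        (fun x _ => hVempty.elim x)
      rw [hCeq]
      calc Set.ncard {S : Finset V | G.IsClique (S : Set V)} ≤ Set.ncard {(∅ : Finset V)} := by
            apply Set.ncard_le_ncard _ (Set.finite_singleton _)
            intro S _; simp [hall S]
        _ = 1 := Set.ncard_singleton _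
        _ ≤ 0 * 2 ^ t + 1 := by omega
    · have hne : Nonempty V := Fintype.card_pos_iff.mp (hcard ▸ hn)
      have hι : Nonempty ι := nonempty_idx td
      obtain ⟨v, hv⟩ := exists_low_degree td (Classical.arbitrary ι) hw
      set C1 := {S : Finset V | G.IsClique (S : Set V) ∧ v ∈ S} with hC1
      set C0 := {S : Finset V | G.IsClique (S : Set V) ∧ v ∉ S} with hC0
      have hsplit : {S : Finset V | G.IsClique (S : Set V)} ⊆ C0 ∪ C1 := by
        intro S hS; by_cases h : v ∈ S
        · exact Or.inr ⟨hS, h⟩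
        · exact Or.inl ⟨hS, h⟩
      -- C1 bound
      have hdeg : (G.neighborFinset v).card ≤ t := by
        rwa [G.neighborFinset_def, ← Set.ncard_eq_toFinset_card']
      have hC1b : C1.ncard ≤ 2 ^ t := by
        have h1 : C1.ncard ≤ (↑((G.neighborFinset v).powerset) : Set (Finset V)).ncard := by
          apply Set.ncard_le_ncard_of_injOn (fun S => S.erase v)
          · rintro S ⟨hSc, hvS⟩
            rw [Finset.mem_coe, Finset.mem_powerset]
            intro w hw
            rw [Finset.mem_erase] at hw
            rw [G.mem_neighborFinset]
            exact hSc (Finset.mem_coe.mpr hvS) (Finset.mem_coe.mpr hw.2) (Ne.symm hw.1)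
          · rintro S1 ⟨_, h1⟩ S2 ⟨_, h2⟩ he
            simp only at he
            rw [← Finset.insert_erase h1, ← Finset.insert_erase h2, he]
        calc C1.ncard ≤ (↑((G.neighborFinset v).powerset) : Set (Finset V)).ncard := h1
          _ = ((G.neighborFinset v).powerset).card := Set.ncard_coe_finset _
          _ = 2 ^ (G.neighborFinset v).card := Finset.card_powerset _
          _ ≤ 2 ^ t := Nat.pow_le_pow_right (by omega) hdeg
      -- C0 bound
      set V' := {w : V | w ≠ v} with hV'
      have hC0b : C0.ncard ≤ (n - 1) * 2 ^ t + 1 := by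
        have hmap : ∀ S ∈ C0, (S.subtype (fun w => w ≠ v)) ∈
            {S' : Finset ↥V' | (G.induce V').IsClique (S' : Set ↥V')} := by
          rintro S ⟨hSc, hvS⟩
          intro a ha b hb hab
          rw [Finset.mem_coe, Finset.mem_subtype] at ha hb
          have : G.Adj a.1 b.1 :=
            hSc (Finset.mem_coe.mpr ha) (Finset.mem_coe.mpr hb) (fun h => hab (Subtype.ext h))
          exact this
        have hinj : Set.InjOn (fun S => S.subtype (fun w => w ≠ v)) C0 := by
          rintro S1 ⟨_, h1⟩ S2 ⟨_, h2⟩ he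
          have e1 : (S1.subtype (fun w => w ≠ v)).map (Function.Embedding.subtype _) = S1 :=
            Finset.subtype_map_of_mem (fun x hx => by rintro rfl; exact h1 hx)
          have e2 : (S2.subtype (fun w => w ≠ v)).map (Function.Embedding.subtype _) = S2 :=
            Finset.subtype_map_of_mem (fun x hx => by rintro rfl; exact h2 hx)
          rw [← e1, ← e2]
          simp only at he
          rw [he]
        have hcard' : Fintype.card ↥V' = n - 1 := by
          rw [← hcard]
          have : Fintype.card ↥V' = Fintype.card {w : V // w ≠ v} := Fintype.card_congr
            (Equiv.refl _)
          rw [this, Fintype.card_subtype_compl, Fintype.card_subtype_eq]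
        have hIH := IH (n - 1) (by omega) ↥V' inferInstance (G.induce V') t hcard'
          ⟨ι, restrict td v, fun i => le_trans (restrict_card td v i) (hw i)⟩
        calc C0.ncard ≤ Set.ncard {S' : Finset ↥V' | (G.induce V').IsClique (S' : Set ↥V')} :=
              Set.ncard_le_ncard_of_injOn _ hmap hinj
          _ = Nat.card {S' : Finset ↥V' // (G.induce V').IsClique (S' : Set ↥V')} :=
              (Nat.card_coe_set_eq _).symm
          _ ≤ (n - 1) * 2 ^ t + 1 := hIH
      rw [hCeq]
      calc Set.ncard {S : Finset V | G.IsClique (S : Set V)} ≤ (C0 ∪ C1).ncard :=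
            Set.ncard_le_ncard hsplit (Set.toFinite _)
        _ ≤ C0.ncard + C1.ncard := Set.ncard_union_le _ _
        _ ≤ ((n - 1) * 2 ^ t + 1) + 2 ^ t := by omega
        _ ≤ n * 2 ^ t + 1 := by
            have : (n - 1) * 2 ^ t + 2 ^ t = n * 2 ^ t := by
              have : n - 1 + 1 = n := by omega
              calc (n - 1) * 2 ^ t + 2 ^ t = ((n - 1) + 1) * 2 ^ t := by ring
                _ = n * 2 ^ t := by rw [this]
            omega
end TD

namespace Pendant
open TreeTools

/-- a walk whose vertices all have a unique neighbour can only appear at the ends of a path -/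
lemma not_internal {W : Type*} {H : SimpleGraph W} {z n0 : W}
    (hz : ∀ y, H.Adj z y → y = n0) :
    ∀ {x y : W} (p : H.Walk x y), p.IsPath → z ∈ p.support → z = x ∨ z = y := by
  intro x y p
  induction p with
  | nil =>
    intro _ hzs
    rw [Walk.support_nil, List.mem_singleton] at hzs
    exact Or.inl hzs
  | @cons x b y h p ih =>
    intro hp hzs
    rw [Walk.support_cons, List.mem_cons] at hzs
    rcases hzs with rfl | hzs
    · exact Or.inl rfl
    · rcases ih hp.of_cons hzs with rfl | rfl
      · cases p with
        | nil => exact Or.inr rfl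
        | @cons _ c _ h2 p2 =>
          exfalso
          have hx : x = n0 := hz x h.symm
          have hc : c = n0 := hz c h2
          have hmem : x ∈ (Walk.cons h2 p2).support := by
            rw [Walk.support_cons]
            exact List.mem_cons_of_mem _ (hx ▸ hc ▸ Walk.start_mem_support p2)
          exact ((Walk.cons_isPath_iff _ _).mp hp).2 hmem
      · exact Or.inr rfl

variable {ι κ : Type} (T : SimpleGraph ι) (att : κ → ι)

def pend : SimpleGraph (ι ⊕ κ) := SimpleGraph.fromRel (fun a b => match a, b with
  | Sum.inl i, Sum.inl j => T.Adj i j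
  | Sum.inl i, Sum.inr S => i = att S
  | _, _ => False)

lemma pend_adj_inl_inl {i j : ι} : (pend T att).Adj (Sum.inl i) (Sum.inl j) ↔ T.Adj i j := by
  simp only [pend, SimpleGraph.fromRel_adj, ne_eq, Sum.inl.injEq]
  constructor
  · rintro ⟨hne, h | h⟩
    · exact h
    · exact h.symm
  · intro h
    exact ⟨h.ne, Or.inl h⟩

lemma pend_adj_inl_inr {i : ι} {S : κ} :
    (pend T att).Adj (Sum.inl i) (Sum.inr S) ↔ i = att S := by
  simp only [pend, SimpleGraph.fromRel_adj, ne_eq]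
  constructor
  · rintro ⟨_, h | h⟩
    · exact h
    · exact h.elim
  · intro h
    exact ⟨by simp, Or.inl h⟩

lemma pend_adj_inr {S : κ} {z : ι ⊕ κ} (h : (pend T att).Adj (Sum.inr S) z) :
    z = Sum.inl (att S) := by
  cases z with
  | inl j =>
    have := (pend_adj_inl_inr T att).mp h.symm
    rw [this]
  | inr S' =>
    exfalso
    rcases h with ⟨hne, h | h⟩ <;> exact h

def homInl : T →g (pend T att) where
  toFun := Sum.inl
  map_rel' := fun h => (pend_adj_inl_inl T att).mpr h

lemma pend_connected (hT : T.Connected) : (pend T att).Connected := by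
  have hne : Nonempty ι := hT.nonempty
  constructor
  intro x y
  have toInl : ∀ z : ι ⊕ κ, ∃ i : ι, (pend T att).Reachable z (Sum.inl i) := by
    intro z
    cases z with
    | inl i => exact ⟨i, SimpleGraph.Reachable.refl _⟩
    | inr S => exact ⟨att S, SimpleGraph.Adj.reachable
        (((pend_adj_inl_inr T att).mpr rfl).symm)⟩
  obtain ⟨i, hi⟩ := toInl x
  obtain ⟨j, hj⟩ := toInl y
  exact hi.trans (((hT.preconnected i j).map (homInl T att)).trans hj.symm)

/-- pull back an all-`inl` walk -/
lemma pull (hT : T.IsTree) : ∀ {x y : ι ⊕ κ} (w : (pend T att).Walk x y)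
    (_ : ∀ z ∈ w.support, ∃ c, z = Sum.inl c) {a b : ι}
    (hx : x = Sum.inl a) (hy : y = Sum.inl b),
    ∃ w' : T.Walk a b, w'.map (homInl T att) = w.copy hx hy := by
  intro x y w
  induction w with
  | nil =>
    intro hall a b hx hy
    subst hx
    obtain rfl : a = b := by injection hy
    exact ⟨Walk.nil, rfl⟩
  | @cons x u y h p ih =>
    intro hall a b hx hy
    subst hx hy
    obtain ⟨c, rfl⟩ : ∃ c, u = Sum.inl c := by
      apply hall
      rw [Walk.support_cons]
      exact List.mem_cons_of_mem _ (Walk.start_mem_support p)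
    have hac : T.Adj a c := (pend_adj_inl_inl T att).mp h
    have hall' : ∀ z ∈ p.support, ∃ c, z = Sum.inl c := by
      intro z hz
      refine hall z ?_
      rw [Walk.support_cons]
      exact List.mem_cons_of_mem _ hz
    obtain ⟨w', hw'⟩ := ih hall' rfl rfl
    refine ⟨Walk.cons hac w', ?_⟩
    rw [Walk.map_cons, hw']
    rfl

lemma uniqA (hT : T.IsTree) {a b : ι} (p q : (pend T att).Walk (Sum.inl a) (Sum.inl b))
    (hp : p.IsPath) (hq : q.IsPath) : p = q := by
  have hall : ∀ (r : (pend T att).Walk (Sum.inl a) (Sum.inl b)), r.IsPath →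
      ∀ z ∈ r.support, ∃ c, z = Sum.inl c := by
    intro r hr z hz
    cases z with
    | inl c => exact ⟨c, rfl⟩
    | inr S =>
      rcases not_internal (fun y hy => pend_adj_inr T att hy) r hr hz with h | h <;>
        simp at h
  obtain ⟨p', hp'⟩ := pull T att hT p (hall p hp) rfl rfl
  obtain ⟨q', hq'⟩ := pull T att hT q (hall q hq) rfl rfl
  rw [Walk.copy_rfl_rfl] at hp' hq'
  have hp'path : p'.IsPath := by
    apply Walk.IsPath.of_map (f := homInl T att)
    rw [hp']; exact hp
  have hq'path : q'.IsPath := by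
    apply Walk.IsPath.of_map (f := homInl T att)
    rw [hq']; exact hq
  rw [← hp', ← hq', thePath_unique hT hp'path, thePath_unique hT hq'path]

lemma uniqC (hT : T.IsTree) {S : κ} {b : ι} (p q : (pend T att).Walk (Sum.inr S) (Sum.inl b))
    (hp : p.IsPath) (hq : q.IsPath) : p = q := by
  cases p with
  | cons h p' =>
    obtain rfl := pend_adj_inr T att h
    cases q with
    | cons h' q' =>
      obtain rfl := pend_adj_inr T att h'
      rw [uniqA T att hT p' q' hp.of_cons hq.of_cons]

lemma uniqB (hT : T.IsTree) {a : ι} {S : κ} (p q : (pend T att).Walk (Sum.inl a) (Sum.inr S))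
    (hp : p.IsPath) (hq : q.IsPath) : p = q := by
  have := uniqC T att hT p.reverse q.reverse hp.reverse hq.reverse
  rw [← p.reverse_reverse, ← q.reverse_reverse, this]

lemma uniqD (hT : T.IsTree) {S S' : κ} (p q : (pend T att).Walk (Sum.inr S) (Sum.inr S'))
    (hp : p.IsPath) (hq : q.IsPath) : p = q := by
  rcases eq_or_ne S S' with rfl | hne
  · have hp' := Walk.isPath_iff_eq_nil.mp hp
    have hq' := Walk.isPath_iff_eq_nil.mp hq
    rw [hp', hq']
  · cases p with
    | nil => exact (hne rfl).elim
    | cons h p' =>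
      obtain rfl := pend_adj_inr T att h
      cases q with
      | nil => exact (hne rfl).elim
      | cons h' q' =>
        obtain rfl := pend_adj_inr T att h'
        rw [uniqB T att hT p' q' hp.of_cons hq.of_cons]

lemma pend_isTree (hT : T.IsTree) : (pend T att).IsTree := by
  refine ⟨pend_connected T att hT.isConnected, ?_⟩
  rw [SimpleGraph.isAcyclic_iff_path_unique]
  intro v w p q
  apply Subtype.ext
  cases v with
  | inl a =>
    cases w with
    | inl b => exact uniqA T att hT p.1 q.1 p.2 q.2
    | inr S => exact uniqB T att hT p.1 q.1 p.2 q.2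
  | inr S =>
    cases w with
    | inl b => exact uniqC T att hT p.1 q.1 p.2 q.2
    | inr S' => exact uniqD T att hT p.1 q.1 p.2 q.2

end Pendant


namespace StarTD
open TreeTools TD Pendant

variable {V : Type} {G : SimpleGraph V} {ι : Type}

open Classical in
noncomputable def sbag (td : TreeDecomp G ι) :
    (ι ⊕ {S : Finset V // G.IsClique (S : Set V)}) →
      Finset (V ⊕ {S : Finset V // G.IsClique (S : Set V)})
  | Sum.inl i => (td.bag i).map ⟨Sum.inl, Sum.inl_injective⟩
  | Sum.inr S => insert (Sum.inr S) (S.1.map ⟨Sum.inl, Sum.inl_injective⟩)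

lemma mem_sbag_inl_inl (td : TreeDecomp G ι) {v : V} {i : ι} :
    Sum.inl v ∈ sbag td (Sum.inl i) ↔ v ∈ td.bag i := by
  simp [sbag]

lemma mem_sbag_inl_inr (td : TreeDecomp G ι) {v : V}
    {S : {S : Finset V // G.IsClique (S : Set V)}} :
    Sum.inl v ∈ sbag td (Sum.inr S) ↔ v ∈ S.1 := by
  simp [sbag]

lemma mem_sbag_inr_inl (td : TreeDecomp G ι) {S : {S : Finset V // G.IsClique (S : Set V)}}
    {i : ι} : ¬ (Sum.inr S ∈ sbag td (Sum.inl i)) := by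
  simp [sbag]

lemma mem_sbag_inr_inr (td : TreeDecomp G ι) {S S' : {S : Finset V // G.IsClique (S : Set V)}} :
    Sum.inr S ∈ sbag td (Sum.inr S') ↔ S = S' := by
  simp [sbag]

lemma sbag_card_inl (td : TreeDecomp G ι) (i : ι) :
    (sbag td (Sum.inl i)).card = (td.bag i).card := by
  simp [sbag]

open Classical in
lemma sbag_card_inr (td : TreeDecomp G ι) (S : {S : Finset V // G.IsClique (S : Set V)}) :
    (sbag td (Sum.inr S)).card ≤ S.1.card + 1 := by
  simp only [sbag]
  refine le_trans (Finset.card_insert_le _ _) ?_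
  rw [Finset.card_map]

lemma sbag_connected (td : TreeDecomp G ι)
    (att : {S : Finset V // G.IsClique (S : Set V)} → ι)
    (hatt : ∀ S, ∀ v ∈ S.1, v ∈ td.bag (att S)) :
    ∀ x, ((pend td.tree att).induce {n | x ∈ sbag td n}).Connected := by
  rintro (v | S)
  · set X := {n | Sum.inl v ∈ sbag td n} with hX
    have hXinl : ∀ i : ι, Sum.inl i ∈ X ↔ v ∈ td.bag i := fun i => mem_sbag_inl_inl td
    have hXinr : ∀ S, Sum.inr S ∈ X ↔ v ∈ S.1 := fun S => mem_sbag_inl_inr td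
    obtain ⟨⟨i0, hi0⟩⟩ := (td.bags_connected v).nonempty
    have hi0' : v ∈ td.bag i0 := hi0
    -- hom from the induced tree to the induced pend graph
    let F : (td.tree.induce {i | v ∈ td.bag i}) →g ((pend td.tree att).induce X) :=
      { toFun := fun p => ⟨Sum.inl p.1, (hXinl p.1).mpr p.2⟩,
        map_rel' := fun {a b} h => (pend_adj_inl_inl td.tree att).mpr h }
    have reach_inl : ∀ (n : ι ⊕ _) (hn : n ∈ X), ∃ (i : ι) (hi : v ∈ td.bag i),
        ((pend td.tree att).induce X).Reachable ⟨n, hn⟩ ⟨Sum.inl i, (hXinl i).mpr hi⟩ := by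
      rintro (i | S) hn
      · exact ⟨i, (hXinl i).mp hn, SimpleGraph.Reachable.refl _⟩
      · have hvS : v ∈ S.1 := (hXinr S).mp hn
        have hbag : v ∈ td.bag (att S) := hatt S v hvS
        refine ⟨att S, hbag, SimpleGraph.Adj.reachable ?_⟩
        exact ((pend_adj_inl_inr td.tree att).mpr rfl).symm
    haveI : Nonempty ↑X := ⟨⟨Sum.inl i0, (hXinl i0).mpr hi0'⟩⟩
    refine SimpleGraph.Connected.mk ?_
    rintro ⟨n1, h1⟩ ⟨n2, h2⟩
    obtain ⟨i1, hi1, r1⟩ := reach_inl n1 h1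
    obtain ⟨i2, hi2, r2⟩ := reach_inl n2 h2
    have mid : ((pend td.tree att).induce X).Reachable
        ⟨Sum.inl i1, (hXinl i1).mpr hi1⟩ ⟨Sum.inl i2, (hXinl i2).mpr hi2⟩ :=
      ((td.bags_connected v).preconnected ⟨i1, hi1⟩ ⟨i2, hi2⟩).map F
    exact r1.trans (mid.trans r2.symm)
  · have hset : {n | Sum.inr S ∈ sbag td n} = {Sum.inr S} := by
      ext n
      rcases n with i | S'
      · simp only [Set.mem_setOf_eq, Set.mem_singleton_iff]
        constructor
        · intro h; exact absurd h (mem_sbag_inr_inl td)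
        · intro h; exact absurd h (by simp)
      · simp only [Set.mem_setOf_eq, Set.mem_singleton_iff, mem_sbag_inr_inr td]
        constructor
        · rintro rfl; rfl
        · rintro h; injection h with h'; rw [h']
    rw [hset]
    haveI : Nonempty ↥({Sum.inr S} : Set (ι ⊕ {S : Finset V // G.IsClique (S : Set V)})) :=
      ⟨⟨Sum.inr S, rfl⟩⟩
    refine SimpleGraph.Connected.mk ?_
    rintro ⟨a, ha⟩ ⟨b, hb⟩
    have : a = b := by
      rw [Set.mem_singleton_iff] at ha hb
      rw [ha, hb]
    subst this
    exact SimpleGraph.Reachable.refl _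

noncomputable def starTD (td : TreeDecomp G ι)
    (att : {S : Finset V // G.IsClique (S : Set V)} → ι)
    (hatt : ∀ S, ∀ v ∈ S.1, v ∈ td.bag (att S)) :
    TreeDecomp (_root_.starGraph G) (ι ⊕ {S : Finset V // G.IsClique (S : Set V)}) where
  tree := pend td.tree att
  isTree := pend_isTree _ _ td.isTree
  bag := sbag td
  edge_mem := by
    rintro a b hab
    obtain ⟨hne, hr⟩ := hab
    match a, b, hr with
    | Sum.inl u, Sum.inl w, hr =>
      have huw : G.Adj u w := by
        rcases hr with h | h
        · exact h
        · exact h.symm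
      obtain ⟨i, hi1, hi2⟩ := td.edge_mem huw
      exact ⟨Sum.inl i, (mem_sbag_inl_inl td).mpr hi1, (mem_sbag_inl_inl td).mpr hi2⟩
    | Sum.inl u, Sum.inr S, hr =>
      have hu : u ∈ S.1 := by
        rcases hr with h | h
        · exact h
        · exact h.elim
      exact ⟨Sum.inr S, (mem_sbag_inl_inr td).mpr hu, (mem_sbag_inr_inr td).mpr rfl⟩
    | Sum.inr S, Sum.inl u, hr =>
      have hu : u ∈ S.1 := by
        rcases hr with h | h
        · exact h.elim
        · exact h
      exact ⟨Sum.inr S, (mem_sbag_inr_inr td).mpr rfl, (mem_sbag_inl_inr td).mpr hu⟩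
    | Sum.inr S, Sum.inr S', hr =>
      exact absurd hr (by rintro (h | h) <;> exact h)
  bags_connected := sbag_connected td att hatt

lemma starTD_card (td : TreeDecomp G ι)
    (att : {S : Finset V // G.IsClique (S : Set V)} → ι)
    (hatt : ∀ S, ∀ v ∈ S.1, v ∈ td.bag (att S)) {t : ℕ}
    (hw : ∀ i, (td.bag i).card ≤ t + 1) :
    ∀ n, ((starTD td att hatt).bag n).card ≤ t + 2 := by
  rintro (i | S)
  · rw [show (starTD td att hatt).bag (Sum.inl i) = sbag td (Sum.inl i) from rfl,
      sbag_card_inl]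
    exact le_trans (hw i) (by omega)
  · refine le_trans (show ((starTD td att hatt).bag (Sum.inr S)).card ≤ S.1.card + 1 from
      sbag_card_inr td S) ?_
    have hsub : S.1 ⊆ td.bag (att S) := fun v hv => hatt S v hv
    have h1 := Finset.card_le_card hsub
    have h2 := hw (att S)
    omega

noncomputable def trivTD (V : Type) [Fintype V] (G : SimpleGraph V) : TreeDecomp G PUnit where
  tree := ⊥
  isTree := by
    refine ⟨SimpleGraph.Connected.mk (fun u v => ?_), SimpleGraph.isAcyclic_bot⟩
    rw [Subsingleton.elim u v]
  bag := fun _ => Finset.univ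
  edge_mem := fun {u v} _ => ⟨PUnit.unit, Finset.mem_univ _, Finset.mem_univ _⟩
  bags_connected := by
    intro v
    haveI : Nonempty ↥{i : PUnit | v ∈ (fun _ => (Finset.univ : Finset V)) i} :=
      ⟨⟨PUnit.unit, Finset.mem_univ v⟩⟩
    refine SimpleGraph.Connected.mk (fun a b => ?_)
    rw [Subsingleton.elim a b]

end StarTD



end TreeTools
end Aux

/-- For an `n`-vertex graph `G` (`n ≥ 1`) of treewidth at most `t`, the
augmented graph `G*` has `O(2^t · n)` vertices and treewidth at most `t + 1`. -/
theorem starGraph_size_and_treewidth :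
    ∃ c : ℕ, ∀ (V : Type) (_ : Fintype V) (G : SimpleGraph V) (n t : ℕ),
      Fintype.card V = n → 0 < n → treewidth G ≤ t →
      Nat.card (V ⊕ {S : Finset V // G.IsClique (S : Set V)}) ≤ c * 2 ^ t * n ∧
      treewidth (starGraph G) ≤ t + 1 := by
  refine ⟨3, ?_⟩
  intro V instV G n t hn hpos htw
  classical
  have hne : {s | ∃ (ι : Type) (td : TreeDecomp G ι), ∀ i, (td.bag i).card ≤ s + 1}.Nonempty :=
    ⟨Fintype.card V, PUnit, TreeTools.StarTD.trivTD V G, fun i => by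
      rw [show (TreeTools.StarTD.trivTD V G).bag i = (Finset.univ : Finset V) from rfl, Finset.card_univ]
      omega⟩
  obtain ⟨ι, td, hwid⟩ := Nat.sInf_mem hne
  have hsinf : sInf {s | ∃ (ι : Type) (td : TreeDecomp G ι), ∀ i, (td.bag i).card ≤ s + 1} ≤ t :=
    htw
  have hw : ∀ i, (td.bag i).card ≤ t + 1 := by
    intro i
    have h1 := hwid i
    omega
  haveI hι : Nonempty ι := TreeTools.TD.nonempty_idx td
  have hattex : ∀ S : {S : Finset V // G.IsClique (S : Set V)}, ∃ i, ∀ v ∈ S.1, v ∈ td.bag i :=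
    fun S => TreeTools.TD.clique_subset_bag td (Classical.arbitrary ι) S.1 S.2
  choose att hatt using hattex
  have hcount := TreeTools.TD.clique_count n V instV G t hn ⟨ι, td, hw⟩
  constructor
  · have hsum : Nat.card (V ⊕ {S : Finset V // G.IsClique (S : Set V)}) =
        Nat.card V + Nat.card {S : Finset V // G.IsClique (S : Set V)} := Nat.card_sum
    rw [hsum, Nat.card_eq_fintype_card, hn]
    have h2 : 1 ≤ 2 ^ t := Nat.one_le_two_pow
    have h3 : n ≤ n * 2 ^ t := Nat.le_mul_of_pos_right n (by omega)
    have h5 : 3 * 2 ^ t * n = n * 2 ^ t + n * 2 ^ t + n * 2 ^ t := by ring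
    have h4 : 1 ≤ n * 2 ^ t := le_trans hpos h3
    linarith [hcount]
  · apply Nat.sInf_le
    exact ⟨ι ⊕ _, TreeTools.StarTD.starTD td att hatt,
      TreeTools.StarTD.starTD_card td att hatt hw⟩


end
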